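/- Let r : [τ̲, τ̄] → ℝ² be a C³ plane curve satisfying the standard setup, with 1 + κρ > 0. For small τ > 0 define u(τ) > 0 implicitly by ⟨r(τ), r(τ+u) − r(τ)⟩ = 0. Then there exists ε > 0 such that u is well defined and continuously differentiable on (0, ε) with u′(τ) > 0 there; that is, u is strictly increasing on (0, ε). -/

import Mathlib

open Set Filter MeasureTheory
open scoped ENNReal Topology

noncomputable section

/-- The dot product of two plane vectors. -/
def dot2 (p q : ℝ × ℝ) : ℝ := p.1 * q.1 + p.2 * q.2

/-- The Euclidean norm of a plane vector. -/
def enorm2 (p : ℝ × ℝ) : ℝ := Real.sqrt (dot2 p p)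

/-- `τ` is an equilibrium parameter of the curve `r` with respect to the point `q`:
the normal line of `r` at `r τ` passes through `q`, i.e. `⟨ṙ(τ), r(τ) − q⟩ = 0`. -/
def IsEquilib (r : ℝ → ℝ × ℝ) (q : ℝ × ℝ) (τ : ℝ) : Prop :=
  dot2 (deriv r τ) (r τ - q) = 0

/-- The signed curvature of a parametrized plane curve. -/
def curv (r : ℝ → ℝ × ℝ) (τ : ℝ) : ℝ :=
  ((deriv r τ).1 * (deriv (deriv r) τ).2 - (deriv r τ).2 * (deriv (deriv r) τ).1) /
    enorm2 (deriv r τ) ^ 3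

/-- The side `[p, q]` of an approximating polygon carries a (stable) equilibrium point
with respect to the origin: `⟨p, q − p⟩ < 0 < ⟨q, q − p⟩`. -/
def SideCarries (p q : ℝ × ℝ) : Prop :=
  dot2 p (q - p) < 0 ∧ 0 < dot2 q (q - p)

/-- The vertex `p` (with neighbouring vertices `pPrev`, `pNext`) carries an (unstable)
equilibrium point with respect to the origin. -/
def VertexCarries (pPrev p pNext : ℝ × ℝ) : Prop :=
  0 < dot2 p (p - pPrev) ∧ 0 < dot2 p (p - pNext)

/-!
Write `⟨r τ, r (τ + v) - r τ⟩ = v · S(τ, v)` with `S(τ, v) = ⟨r τ, ∫₀¹ ṙ (τ + t v) dt⟩`, which is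
`C¹` because `r` is `C²`. At the origin `S = ⟨r 0, ṙ 0⟩ = 0`,
`∂_τ S = |ṙ 0|² + ⟨r 0, r̈ 0⟩ = ẋ(0)² (1 + κρ) > 0` and
`∂_v S = ⟨r 0, r̈ 0⟩ / 2 = ẋ(0)² κρ / 2 < 0`, so the implicit function theorem gives a `C¹`
solution `u` of `S(τ, u τ) = 0` with `u 0 = 0` and `u' 0 = -∂_τ S / ∂_v S > 0`; by continuity
`u' > 0` on some `[0, ε)`.
-/

section ParametricIntegral

variable {H E : Type*} [NormedAddCommGroup H] [NormedSpace ℝ H] [ProperSpace H]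
  [NormedAddCommGroup E] [NormedSpace ℝ E]

theorem hasFDerivAt_intervalIntegral_of_continuous {f : H → ℝ → E} {f' : H → ℝ → H →L[ℝ] E}
    (hf : Continuous ↿f) (hf' : Continuous ↿f') (hdf : ∀ x t, HasFDerivAt (f · t) (f' x t) x)
    (a b : ℝ) (x₀ : H) :
    HasFDerivAt (fun x => ∫ t in a..b, f x t) (∫ t in a..b, f' x₀ t) x₀ := by
  obtain ⟨C, hC⟩ := ((isCompact_closedBall x₀ 1).prod (isCompact_uIcc (a := a) (b := b))
    ).exists_bound_of_continuousOn hf'.continuousOn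
  refine intervalIntegral.hasFDerivAt_integral_of_dominated_of_fderiv_le (bound := fun _ => C)
    (Metric.ball_mem_nhds x₀ one_pos) ?_ ?_ ?_ ?_ intervalIntegrable_const ?_
  · exact Eventually.of_forall fun x => (hf.comp (Continuous.prodMk_right x)).aestronglyMeasurable
  · exact (hf.comp (Continuous.prodMk_right x₀)).intervalIntegrable _ _
  · exact (hf'.comp (Continuous.prodMk_right x₀)).aestronglyMeasurable
  · exact Eventually.of_forall fun t ht x hx =>
      hC (x, t) ⟨Metric.ball_subset_closedBall hx, uIoc_subset_uIcc ht⟩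
  · exact Eventually.of_forall fun t _ x _ => hdf x t

theorem contDiff_intervalIntegral_of_contDiff {f : H → ℝ → E} (hf : ContDiff ℝ 1 ↿f) (a b : ℝ) :
    ContDiff ℝ 1 fun x => ∫ t in a..b, f x t := by
  set f' : H → ℝ → H →L[ℝ] E := fun x t => (fderiv ℝ ↿f (x, t)).comp (.inl ℝ H ℝ)
  have hf' : Continuous ↿f' := (hf.continuous_fderiv one_ne_zero).clm_comp continuous_const
  have hdf : ∀ x t, HasFDerivAt (f · t) (f' x t) x := fun x t =>
    ((hf.differentiable one_ne_zero (x, t)).hasFDerivAt.comp x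
      (hasFDerivAt_prodMk_left (𝕜 := ℝ) x t) :)
  have hderiv := hasFDerivAt_intervalIntegral_of_continuous hf.continuous hf' hdf a b
  refine contDiff_one_iff_fderiv.mpr ⟨fun x => (hderiv x).differentiableAt, ?_⟩
  rw [funext fun x => (hderiv x).fderiv]
  exact intervalIntegral.continuous_parametric_intervalIntegral_of_continuous' hf' a b

end ParametricIntegral

section MeanDeriv

variable {E : Type*} [NormedAddCommGroup E] [NormedSpace ℝ E]

/-- The mean of `g'` over `[x, x + v]`, i.e. the difference quotient `(g (x + v) - g x) / v`
extended by `g' x` at `v = 0`. -/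
def meanDeriv (g : ℝ → E) (p : ℝ × ℝ) : E :=
  ∫ t in (0 : ℝ)..1, deriv g (p.1 + t * p.2)

@[simp]
theorem meanDeriv_mk_zero [CompleteSpace E] (g : ℝ → E) (x : ℝ) :
    meanDeriv g (x, 0) = deriv g x := by
  simp [meanDeriv]

theorem sub_eq_smul_meanDeriv [CompleteSpace E] {g : ℝ → E} (hg : ContDiff ℝ 1 g) (x v : ℝ) :
    g (x + v) - g x = v • meanDeriv g (x, v) := by
  have hFTC : ∫ s in x..x + v, deriv g s = g (x + v) - g x :=
    intervalIntegral.integral_deriv_eq_sub (fun s _ => hg.differentiable one_ne_zero s)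
      ((hg.continuous_deriv le_rfl).intervalIntegrable _ _)
  simp only [meanDeriv, mul_comm _ v]
  rw [intervalIntegral.smul_integral_comp_add_mul, mul_zero, mul_one, add_zero, hFTC]

theorem contDiff_meanDeriv {g : ℝ → E} (hg : ContDiff ℝ 2 g) : ContDiff ℝ 1 (meanDeriv g) := by
  have hg' : ContDiff ℝ 1 (deriv g) := hg.deriv'
  exact contDiff_intervalIntegral_of_contDiff (f := fun (p : ℝ × ℝ) t => deriv g (p.1 + t * p.2))
    (hg'.comp (by fun_prop)) 0 1

theorem hasDerivAt_meanDeriv_mk_zero [CompleteSpace E] {g : ℝ → E} (hg : ContDiff ℝ 2 g) (x : ℝ) :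
    HasDerivAt (fun v => meanDeriv g (x, v)) ((2 : ℝ)⁻¹ • deriv (deriv g) x) 0 := by
  have hg' : ContDiff ℝ 1 (deriv g) := hg.deriv'
  have hslice : ∀ v t,
      HasDerivAt (fun w => deriv g (x + t * w)) (t • deriv (deriv g) (x + t * v)) v := fun v t => by
      simpa [Function.comp_def] using (hg'.differentiable one_ne_zero _).hasDerivAt.scomp v
        (((hasDerivAt_id v).const_mul t).const_add x)
  have h := hasFDerivAt_intervalIntegral_of_continuous
    (f := fun v t => deriv g (x + t * v))
    (f' := fun v t => (1 : ℝ →L[ℝ] ℝ).smulRight (t • deriv (deriv g) (x + t * v)))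
    (by fun_prop) (by fun_prop) (fun v t => (hslice v t).hasFDerivAt) 0 1 0
  show HasDerivAt (fun v => ∫ t in (0 : ℝ)..1, deriv g (x + t * v)) _ 0
  convert h.hasDerivAt using 1
  rw [ContinuousLinearMap.intervalIntegral_apply
    ((by fun_prop : Continuous _).intervalIntegrable _ _)]
  simp [intervalIntegral.integral_smul_const, integral_id]

end MeanDeriv

theorem exists_implicit_of_hasDerivAt {F : ℝ × ℝ → ℝ} {p : ℝ × ℝ} {A B : ℝ}
    (hF : ContDiffAt ℝ 1 F p) (hA : HasDerivAt (fun x => F (x, p.2)) A p.1)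
    (hB : HasDerivAt (fun y => F (p.1, y)) B p.2) (hB0 : B ≠ 0) :
    ∃ u : ℝ → ℝ, u p.1 = p.2 ∧ ContDiffAt ℝ 1 u p.1 ∧ (∀ᶠ x in 𝓝 p.1, F (x, u x) = F p) ∧
      deriv u p.1 = -A / B := by
  set L := fderiv ℝ F p
  have hL : HasFDerivAt F L p := (hF.differentiableAt one_ne_zero).hasFDerivAt
  have hLA : L (1, 0) = A :=
    (hL.comp_hasDerivAt_of_eq p.1 ((hasDerivAt_id _).prodMk (hasDerivAt_const _ _)) rfl).unique hA
  have hLB : L (0, 1) = B :=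
    (hL.comp_hasDerivAt_of_eq p.2 ((hasDerivAt_const _ _).prodMk (hasDerivAt_id _)) rfl).unique hB
  have hinv : (L ∘L .inr ℝ ℝ ℝ).IsInvertible :=
    ⟨ContinuousLinearEquiv.unitsEquivAut ℝ (Units.mk0 B hB0),
      ContinuousLinearMap.ext_ring (by simp [hLB])⟩
  set u := hF.implicitFunction one_ne_zero hinv
  have hu : ContDiffAt ℝ 1 u p.1 := hF.contDiffAt_implicitFunction one_ne_zero hinv
  have hFu := hF.eventually_apply_implicitFunction one_ne_zero hinv
  have hu0 : u p.1 = p.2 := hF.implicitFunction_apply_self one_ne_zero hinv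
  refine ⟨u, hu0, hu, hFu, ?_⟩
  have hLu : L (1, deriv u p.1) = A + deriv u p.1 * B := by
    rw [show ((1 : ℝ), deriv u p.1) = (1, 0) + deriv u p.1 • (0, 1) by simp, L.map_add,
      L.map_smul, hLA, hLB, smul_eq_mul]
  have hchain : HasDerivAt (fun x => F (x, u x)) (A + deriv u p.1 * B) p.1 :=
    hLu ▸ hL.comp_hasDerivAt_of_eq p.1
      ((hasDerivAt_id _).prodMk (hu.differentiableAt one_ne_zero).hasDerivAt) (by simp [hu0])
  have hzero : A + deriv u p.1 * B = 0 :=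
    hchain.unique ((hasDerivAt_const p.1 (F p)).congr_of_eventuallyEq hFu)
  field_simp
  linarith

theorem dot2_smul_right (p q : ℝ × ℝ) (c : ℝ) : dot2 p (c • q) = c * dot2 p q := by
  simp only [dot2, Prod.smul_fst, Prod.smul_snd, smul_eq_mul]
  ring

theorem HasDerivAt.dot2 {f g : ℝ → ℝ × ℝ} {f' g' : ℝ × ℝ} {x : ℝ} (hf : HasDerivAt f f' x)
    (hg : HasDerivAt g g' x) :
    HasDerivAt (fun y => dot2 (f y) (g y)) (dot2 f' (g x) + dot2 (f x) g') x := by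
  have fst {h : ℝ → ℝ × ℝ} {h'} (hh : HasDerivAt h h' x) : HasDerivAt (fun y => (h y).1) h'.1 x :=
    (ContinuousLinearMap.fst ℝ ℝ ℝ).hasFDerivAt.comp_hasDerivAt x hh
  have snd {h : ℝ → ℝ × ℝ} {h'} (hh : HasDerivAt h h' x) : HasDerivAt (fun y => (h y).2) h'.2 x :=
    (ContinuousLinearMap.snd ℝ ℝ ℝ).hasFDerivAt.comp_hasDerivAt x hh
  unfold _root_.dot2
  exact (((fst hf).mul (fst hg)).add ((snd hf).mul (snd hg))).congr_deriv (by ring)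

def dotSlope (r : ℝ → ℝ × ℝ) (p : ℝ × ℝ) : ℝ := dot2 (r p.1) (meanDeriv r p)

section DotSlope

variable {r : ℝ → ℝ × ℝ}

theorem dot2_sub_eq_mul_dotSlope (hr : ContDiff ℝ 1 r) (τ v : ℝ) :
    dot2 (r τ) (r (τ + v) - r τ) = v * dotSlope r (τ, v) := by
  rw [sub_eq_smul_meanDeriv hr, dot2_smul_right, dotSlope]

theorem contDiff_dotSlope (hr : ContDiff ℝ 2 r) : ContDiff ℝ 1 (dotSlope r) := by
  have hr' : ContDiff ℝ 1 r := hr.of_le (by norm_num)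
  have hm := contDiff_meanDeriv hr
  unfold dotSlope dot2
  fun_prop

theorem hasDerivAt_dotSlope_mk_zero (hr : ContDiff ℝ 2 r) (τ : ℝ) :
    HasDerivAt (fun σ => dotSlope r (σ, 0))
      (dot2 (deriv r τ) (deriv r τ) + dot2 (r τ) (deriv (deriv r) τ)) τ := by
  simp only [dotSlope, meanDeriv_mk_zero]
  exact ((hr.differentiable (by norm_num)) τ).hasDerivAt.dot2
    ((hr.deriv'.differentiable one_ne_zero) τ).hasDerivAt

theorem hasDerivAt_dotSlope_mk (hr : ContDiff ℝ 2 r) (τ : ℝ) :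
    HasDerivAt (fun v => dotSlope r (τ, v)) (dot2 (r τ) (deriv (deriv r) τ) / 2) 0 := by
  unfold dotSlope
  convert (hasDerivAt_const 0 (r τ)).dot2 (hasDerivAt_meanDeriv_mk_zero hr τ) using 1
  rw [dot2_smul_right]
  simp only [dot2, Prod.fst_zero, meanDeriv_mk_zero, zero_mul, Prod.snd_zero, add_zero, zero_add]
  ring

end DotSlope

theorem curv_eq_of_deriv_snd_eq_zero {r : ℝ → ℝ × ℝ} {τ : ℝ} (h2 : (deriv r τ).2 = 0)
    (h1 : 0 < (deriv r τ).1) : curv r τ = (deriv (deriv r) τ).2 / (deriv r τ).1 ^ 2 := by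
  have hnorm : enorm2 (deriv r τ) = (deriv r τ).1 := by
    rw [enorm2, dot2, h2, mul_zero, add_zero, Real.sqrt_mul_self h1.le]
  rw [curv, hnorm, h2]
  field_simp
  ring

theorem mul_neg_and_sq_add_mul_pos {a b ρ : ℝ} (ha : 0 < a) (h₁ : 1 + b / a ^ 2 * ρ < 1)
    (h₂ : 0 < 1 + b / a ^ 2 * ρ) : ρ * b < 0 ∧ 0 < a * a + ρ * b := by
  rw [div_mul_eq_mul_div] at h₁ h₂
  constructor
  · have := (div_lt_iff₀ (pow_pos ha 2)).mp (by linarith : b * ρ / a ^ 2 < 0)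
    linarith [mul_comm ρ b]
  · have := (lt_div_iff₀ (pow_pos ha 2)).mp (by linarith : -1 < b * ρ / a ^ 2)
    linarith [mul_comm ρ b]

theorem ContDiffAt.exists_Ico_strictMonoOn {u : ℝ → ℝ} {x₀ : ℝ} {P : ℝ → Prop}
    (hu : ContDiffAt ℝ 1 u x₀) (hu' : 0 < deriv u x₀) (hP : ∀ᶠ x in 𝓝 x₀, P x) :
    ∃ c > x₀, (∀ x ∈ Ico x₀ c, P x ∧ ContDiffAt ℝ 1 u x ∧ 0 < deriv u x) ∧
      StrictMonoOn u (Ico x₀ c) := by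
  have hcont : ContinuousAt (deriv u) x₀ :=
    (hu.continuousAt_fderiv one_ne_zero).clm_apply continuousAt_const
  obtain ⟨c, hc, hsub⟩ := mem_nhdsGE_iff_exists_Ico_subset.mp <| nhdsWithin_le_nhds <|
    hP.and <| (hu.eventually (by simp)).and (hcont.eventually (lt_mem_nhds hu'))
  refine ⟨c, hc, hsub, strictMonoOn_of_deriv_pos (convex_Ico _ _) ?_ ?_⟩
  · exact fun x hx => (hsub hx).2.1.continuousAt.continuousWithinAt
  · exact fun x hx => (hsub (interior_subset hx)).2.2

theorem implicit_function_strictly_increasing_general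
    (τlo τhi ρ : ℝ) (r : ℝ → ℝ × ℝ)
    (hτlo : τlo < 0) (hτhi : 0 < τhi)
    (hr : ContDiff ℝ 3 r)
    (hm : r 0 = (0, ρ))
    (hx : ∀ τ ∈ Icc τlo τhi, 0 < (deriv r τ).1)
    (hy : (deriv r 0).2 = 0)
    (hκ₁ : 1 + curv r 0 * ρ < 1) (hκ₂ : 0 < 1 + curv r 0 * ρ) :
    ∃ ε > (0 : ℝ), ∃ u : ℝ → ℝ,
      (∀ τ ∈ Ioo (0 : ℝ) ε, 0 < u τ ∧ dot2 (r τ) (r (τ + u τ) - r τ) = 0) ∧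
      ContDiffOn ℝ 1 u (Ioo (0 : ℝ) ε) ∧
      (∀ τ ∈ Ioo (0 : ℝ) ε, 0 < deriv u τ) ∧
      StrictMonoOn u (Ioo (0 : ℝ) ε) := by
  have hr2 : ContDiff ℝ 2 r := hr.of_le (by norm_num)
  set a := (deriv r 0).1
  set b := (deriv (deriv r) 0).2
  have ha : 0 < a := hx 0 ⟨hτlo.le, hτhi.le⟩
  rw [curv_eq_of_deriv_snd_eq_zero hy ha] at hκ₁ hκ₂
  obtain ⟨hb, hA⟩ := mul_neg_and_sq_add_mul_pos ha hκ₁ hκ₂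
  have hτ : HasDerivAt (fun τ => dotSlope r (τ, 0)) (a * a + ρ * b) 0 := by
    convert hasDerivAt_dotSlope_mk_zero hr2 0 using 1
    simp [dot2, hm, hy, a, b]
  have hv : HasDerivAt (fun v => dotSlope r (0, v)) (ρ * b / 2) 0 := by
    convert hasDerivAt_dotSlope_mk hr2 0 using 1
    simp [dot2, hm, b]
  obtain ⟨u, hu0, hu, hslope, hu'⟩ := exists_implicit_of_hasDerivAt (p := (0, 0))
    (contDiff_dotSlope hr2).contDiffAt hτ hv (by linarith)
  have hslope0 : dotSlope r (0, 0) = 0 := by simp [dotSlope, dot2, hm, hy]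
  have hu'pos : 0 < deriv u 0 := by
    rw [hu']
    exact div_pos_of_neg_of_neg (by linarith) (by linarith)
  obtain ⟨ε, hε, hsub, hmono⟩ := hu.exists_Ico_strictMonoOn hu'pos hslope
  have hsub' := Ioo_subset_Ico_self.trans hsub
  refine ⟨ε, hε, u, fun τ hτ => ⟨?_, ?_⟩, fun τ hτ => (hsub' hτ).2.1.contDiffWithinAt,
    fun τ hτ => (hsub' hτ).2.2, hmono.mono Ioo_subset_Ico_self⟩
  · simpa [hu0] using hmono (left_mem_Ico.mpr hε) (Ioo_subset_Ico_self hτ) hτ.1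
  · rw [dot2_sub_eq_mul_dotSlope (hr.of_le (by norm_num)), (hsub' hτ).1, hslope0, mul_zero]

/-- In the standard setup with `1 + κρ > 0`, the function `u(τ)` defined
implicitly for small `τ > 0` by `⟨r(τ), r(τ+u) − r(τ)⟩ = 0` is well defined and continuously
differentiable on some interval `(0, ε)` with `u′ > 0` there; in particular it is strictly
increasing on `(0, ε)`. -/
theorem implicit_function_strictly_increasing
    (τlo τhi ρ : ℝ) (r : ℝ → ℝ × ℝ)
    (hτlo : τlo < 0) (hτhi : 0 < τhi)
    (hr : ContDiff ℝ 3 r)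
    (hρ : 0 < ρ) (hm : r 0 = (0, ρ))
    (hx : ∀ τ ∈ Icc τlo τhi, 0 < (deriv r τ).1)
    (hy : (deriv r 0).2 = 0)
    (huniq : ∀ τ ∈ Icc τlo τhi, IsEquilib r (0, 0) τ → τ = 0)
    (hκ₁ : 1 + curv r 0 * ρ < 1) (hκ₂ : 0 < 1 + curv r 0 * ρ) :
    ∃ ε > (0 : ℝ), ∃ u : ℝ → ℝ,
      (∀ τ ∈ Ioo (0 : ℝ) ε, 0 < u τ ∧ dot2 (r τ) (r (τ + u τ) - r τ) = 0) ∧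
      ContDiffOn ℝ 1 u (Ioo (0 : ℝ) ε) ∧
      (∀ τ ∈ Ioo (0 : ℝ) ε, 0 < deriv u τ) ∧
      StrictMonoOn u (Ioo (0 : ℝ) ε) :=
  implicit_function_strictly_increasing_general τlo τhi ρ r hτlo hτhi hr hm hx hy hκ₁ hκ₂
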